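/- Let μ : L → U be an Ω-injective matching for an LRR-rewrite rule L ← D(L,E) → R with right leg ρ, and let ∼ be the equivalence on N_R + N_{D(U,μ(E))} generated by D_{μ,E}(n) ∼ ρ(n). Then a labeled node n_U of U is equivalent to some labeled node of R if and only if n_U ∈ μ(N_L^Ω), i.e., n_U is the image under μ of a labeled node of L. -/

import Mathlib

open CategoryTheory

/-- A graph over a signature `Ω` with arity function `ar`: nodes, an (implicit) subset of
labeled nodes (those where `label` is `some`), and a successor function assigning to each
labeled node a string of nodes whose length is the arity of its label. Unlabeled nodes
have no successors. -/
structure LGraph (Ω : Type) (ar : Ω → ℕ) where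
  N : Type
  label : N → Option Ω
  succ : N → List N
  hlen : ∀ n f, label n = some f → (succ n).length = ar f
  hnone : ∀ n, label n = none → succ n = []

namespace LGraph

variable {Ω : Type} {ar : Ω → ℕ}

/-- A graph homomorphism: a map on nodes preserving labeledness, labels and successors. -/
@[ext]
structure Hom (G H : LGraph Ω ar) where
  toFun : G.N → H.N
  map_label : ∀ n f, G.label n = some f → H.label (toFun n) = some f
  map_succ : ∀ n f, G.label n = some f → H.succ (toFun n) = (G.succ n).map toFun

def Hom.id (G : LGraph Ω ar) : Hom G G :=
  ⟨fun n => n, fun _ _ h => h, fun n _ _ => by simp⟩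

def Hom.comp {G H K : LGraph Ω ar} (φ : Hom G H) (ψ : Hom H K) : Hom G K where
  toFun := fun n => ψ.toFun (φ.toFun n)
  map_label := fun n f h => ψ.map_label _ f (φ.map_label n f h)
  map_succ := fun n f h => by
    rw [ψ.map_succ _ f (φ.map_label n f h), φ.map_succ n f h, List.map_map]; rfl

instance : Category (LGraph Ω ar) where
  Hom := Hom
  id := Hom.id
  comp := Hom.comp
  id_comp := by intros; rfl
  comp_id := by intros; rfl
  assoc := by intros; rfl

/-- An edge of a graph: a labeled node together with a position among its successors. -/
def Edge (G : LGraph Ω ar) := Σ n : G.N, Fin (G.succ n).length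

lemma Edge.label_isSome {G : LGraph Ω ar} (e : G.Edge) : (G.label e.1).isSome := by
  have h2 : 0 < (G.succ e.1).length := Nat.lt_of_le_of_lt (Nat.zero_le _) e.2.isLt
  cases hl : G.label e.1 with
  | none => rw [G.hnone e.1 hl] at h2; simp at h2
  | some f => rfl

/-- The image of an edge under a homomorphism. -/
def Hom.edgeMap {G H : LGraph Ω ar} (φ : Hom G H) (e : G.Edge) : H.Edge :=
  ⟨φ.toFun e.1, ⟨e.2, by
    obtain ⟨f, hf⟩ := Option.isSome_iff_exists.mp e.label_isSome
    rw [φ.map_succ e.1 f hf, List.length_map]; exact e.2.isLt⟩⟩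

open Classical in
/-- The disconnected graph `D(G,E)`: nodes of `G` plus a fresh unlabeled node `n[i]`
for each edge `(n,i) ∈ E`, with each edge of `E` redirected to its fresh node. -/
noncomputable def D (G : LGraph Ω ar) (E : Set G.Edge) : LGraph Ω ar where
  N := G.N ⊕ {e : G.Edge // e ∈ E}
  label := Sum.elim G.label fun _ => none
  succ := Sum.elim
    (fun n => List.ofFn fun i : Fin (G.succ n).length =>
      if h : (⟨n, i⟩ : G.Edge) ∈ E then Sum.inr ⟨⟨n, i⟩, h⟩ else Sum.inl ((G.succ n).get i))
    (fun _ => [])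
  hlen := by
    rintro (n | e) f h
    · simpa using G.hlen n f h
    · simp at h
  hnone := by
    rintro (n | e) h
    · simp only [Sum.elim_inl] at h ⊢
      simp [List.ofFn_eq_nil_iff, G.hnone n h]
    · rfl

/-- The connection homomorphism `δ_{G,E} : D(G,E) → G`. -/
noncomputable def delta (G : LGraph Ω ar) (E : Set G.Edge) : Hom (G.D E) G where
  toFun := Sum.elim (fun n => n) (fun e => (G.succ e.1.1).get e.1.2)
  map_label := by
    rintro (n | e) f h
    · exact h
    · simp [D] at h
  map_succ := by
    rintro (n | e) f h
    · simp only [D, Sum.elim_inl, List.map_ofFn]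
      apply List.ext_getElem
      · simp
      · intro i h1 h2
        simp only [List.getElem_ofFn, Function.comp_apply]
        split <;> simp [List.get_eq_getElem]
    · simp [D] at h
end LGraph
namespace LGraph
variable {Ω : Type} {ar : Ω → ℕ}

/-- The underlying node map of the disconnected homomorphism `D_{φ,E}`. -/
def dmapFun {G H : LGraph Ω ar} (φ : Hom G H) (E : Set G.Edge) :
    (G.D E).N → (H.D (φ.edgeMap '' E)).N :=
  Sum.elim (fun n => Sum.inl (φ.toFun n))
    (fun e => Sum.inr ⟨φ.edgeMap e.1, Set.mem_image_of_mem _ e.2⟩)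

/-- `μ` is `Ω`-injective if it is injective on labeled nodes. -/
def OmegaInjective {G H : LGraph Ω ar} (μ : Hom G H) : Prop :=
  ∀ n n', (G.label n).isSome → (G.label n').isSome → μ.toFun n = μ.toFun n' → n = n'

/-- The conditions on the right leg `ρ : D(L,E) → R` of an LRR-rewrite rule:
unlabeled nodes of `L` are mapped to unlabeled nodes of `R`, injectively. -/
def IsLRRRule {L R : LGraph Ω ar} (E : Set L.Edge) (ρ : Hom (L.D E) R) : Prop :=
  (∀ n : L.N, L.label n = none → R.label (ρ.toFun (Sum.inl n)) = none) ∧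
  (∀ n n' : L.N, L.label n = none → L.label n' = none →
      ρ.toFun (Sum.inl n) = ρ.toFun (Sum.inl n') → n = n')

section Span
variable {G₀ G₁ G₂ : LGraph Ω ar}

/-- The relation on `N₁ + N₂` generated by a span: `φ₁(n₀) ∼ φ₂(n₀)`. -/
def spanRel (φ₁ : Hom G₀ G₁) (φ₂ : Hom G₀ G₂) : (G₁.N ⊕ G₂.N) → (G₁.N ⊕ G₂.N) → Prop :=
  fun x y => ∃ n₀, x = Sum.inl (φ₁.toFun n₀) ∧ y = Sum.inr (φ₂.toFun n₀)

/-- Label of a node of the disjoint union. -/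
def nodeLabel (G₁ G₂ : LGraph Ω ar) : (G₁.N ⊕ G₂.N) → Option Ω :=
  Sum.elim G₁.label G₂.label

/-- Successors of a node of the disjoint union. -/
def nodeSucc (G₁ G₂ : LGraph Ω ar) : (G₁.N ⊕ G₂.N) → List (G₁.N ⊕ G₂.N) :=
  Sum.elim (fun n => (G₁.succ n).map Sum.inl) (fun n => (G₂.succ n).map Sum.inr)

/-- A span of graphs is strongly labeled if in each equivalence class all labeled
nodes share the same label and have pairwise equivalent successors. -/
def StronglyLabeled (φ₁ : Hom G₀ G₁) (φ₂ : Hom G₀ G₂) : Prop :=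
  ∀ x y, Relation.EqvGen (spanRel φ₁ φ₂) x y →
    ∀ f g, nodeLabel G₁ G₂ x = some f → nodeLabel G₁ G₂ y = some g →
      f = g ∧ List.Forall₂ (Relation.EqvGen (spanRel φ₁ φ₂)) (nodeSucc G₁ G₂ x) (nodeSucc G₁ G₂ y)

open Classical in
/-- The candidate pushout graph of a span: nodes are the quotient of `N₁ + N₂`,
labeled classes are those containing a labeled node, labels and successors are
taken from a (chosen) labeled representative. -/
noncomputable def pushoutGraph (φ₁ : Hom G₀ G₁) (φ₂ : Hom G₀ G₂) : LGraph Ω ar where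
  N := Quot (spanRel φ₁ φ₂)
  label := fun c =>
    if h : ∃ x, Quot.mk _ x = c ∧ (nodeLabel G₁ G₂ x).isSome
    then nodeLabel G₁ G₂ h.choose else none
  succ := fun c =>
    if h : ∃ x, Quot.mk _ x = c ∧ (nodeLabel G₁ G₂ x).isSome
    then (nodeSucc G₁ G₂ h.choose).map (Quot.mk _) else []
  hlen := by
    intro c f h
    try dsimp only at h ⊢
    by_cases hx : ∃ x, Quot.mk _ x = c ∧ (nodeLabel G₁ G₂ x).isSome
    · rw [dif_pos hx] at h ⊢
      rw [List.length_map]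
      rcases hc : hx.choose with n | n <;> rw [hc] at h <;>
        simp only [nodeLabel, nodeSucc, Sum.elim_inl, Sum.elim_inr] at h ⊢ <;>
        rw [List.length_map]
      · exact G₁.hlen n f h
      · exact G₂.hlen n f h
    · rw [dif_neg hx] at h; simp at h
  hnone := by
    intro c h
    try dsimp only at h ⊢
    by_cases hx : ∃ x, Quot.mk _ x = c ∧ (nodeLabel G₁ G₂ x).isSome
    · rw [dif_pos hx] at h
      have := hx.choose_spec.2
      rw [h] at this; simp at this
    · rw [dif_neg hx]

end Span

open Classical in
/-- The disconnected graph `D̄(G,o)`: `G` plus a fresh unlabeled node `mr`, with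
all edges targeting `o` redirected to `mr`. -/
noncomputable def Dbar (G : LGraph Ω ar) (o : G.N) : LGraph Ω ar where
  N := G.N ⊕ Unit
  label := Sum.elim G.label fun _ => none
  succ := Sum.elim
    (fun n => (G.succ n).map fun t => if t = o then Sum.inr () else Sum.inl t)
    (fun _ => [])
  hlen := by
    rintro (n | u) f h
    · simp only [Sum.elim_inl] at h ⊢
      rw [List.length_map]; exact G.hlen n f h
    · simp at h
  hnone := by
    rintro (n | u) h
    · simp only [Sum.elim_inl] at h ⊢
      rw [G.hnone n h]; rfl
    · rfl

open Classical in
/-- The homomorphism `δ_μ : D̄(G,o) → G`, identity on `N_G`, sending `mr` to `o`. -/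
noncomputable def deltaBar (G : LGraph Ω ar) (o : G.N) : Hom (G.Dbar o) G where
  toFun := Sum.elim (fun n => n) fun _ => o
  map_label := by
    rintro (n | u) f h
    · exact h
    · simp [Dbar] at h
  map_succ := by
    rintro (n | u) f h
    · simp only [Dbar, Sum.elim_inl, List.map_map]
      symm
      refine (List.map_congr_left ?_).trans (List.map_id _)
      intro t ht
      by_cases h' : t = o <;> simp [h']
    · simp [Dbar] at h

open Classical in
/-- The graph obtained from `U` by redirecting all edges targeting `a` towards `b`. -/
noncomputable def redirect (U : LGraph Ω ar) (a b : U.N) : LGraph Ω ar where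
  N := U.N
  label := U.label
  succ := fun n => (U.succ n).map fun t => if t = a then b else t
  hlen := by intro n f h; (try dsimp only); rw [List.length_map]; exact U.hlen n f h
  hnone := by intro n h; (try dsimp only); rw [U.hnone n h]; rfl

/-- The graph `P` with two unlabeled nodes: `false` is `ar`, `true` is `pr`. -/
def P (Ω : Type) (ar : Ω → ℕ) : LGraph Ω ar :=
  ⟨Bool, fun _ => none, fun _ => [], fun _ _ h => by simp at h, fun _ _ => rfl⟩

/-- The switch graph `SW` with three unlabeled nodes: `some false` is `ar`,
`some true` is `pr`, `none` is `mr`. -/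
def SW (Ω : Type) (ar : Ω → ℕ) : LGraph Ω ar :=
  ⟨Option Bool, fun _ => none, fun _ => [], fun _ _ h => by simp at h, fun _ _ => rfl⟩

/-- `λ : SW → P`, sending `ar, mr ↦ ar` and `pr ↦ pr`. -/
def lamGR : Hom (SW Ω ar) (P Ω ar) :=
  ⟨fun x => x.getD false, fun _ _ h => by simp [SW] at h, fun _ _ h => by simp [SW] at h⟩

/-- `ρ : SW → P`, sending `ar ↦ ar` and `pr, mr ↦ pr`. -/
def rhoGR : Hom (SW Ω ar) (P Ω ar) :=
  ⟨fun x => x.getD true, fun _ _ h => by simp [SW] at h, fun _ _ h => by simp [SW] at h⟩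

/-- `D̄_μ : SW → D̄(U, μ(ar))`. -/
noncomputable def dbarMu {U : LGraph Ω ar} (μ : Hom (P Ω ar) U) :
    Hom (SW Ω ar) (U.Dbar (μ.toFun false)) where
  toFun := fun x => match x with
    | some b => Sum.inl (μ.toFun b)
    | none => Sum.inr ()
  map_label := fun _ _ h => by simp [SW] at h
  map_succ := fun _ _ h => by simp [SW] at h

/-- A graph with a single unlabeled node. -/
def oneUnlabeled (Ω : Type) (ar : Ω → ℕ) : LGraph Ω ar :=
  ⟨PUnit, fun _ => none, fun _ => [], fun _ _ h => by simp at h, fun _ _ => rfl⟩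

/-- A graph with a single node labeled `a` (looping on itself `ar a` times). -/
def singleLabeled (a : Ω) : LGraph Ω ar :=
  ⟨PUnit, fun _ => some a, fun _ => List.replicate (ar a) PUnit.unit,
   fun _ f h => by cases h; simp, fun _ h => by simp at h⟩

/-- The unique homomorphism from the one-point unlabeled graph to `singleLabeled a`. -/
def toSingle (a : Ω) : Hom (oneUnlabeled Ω ar) (singleLabeled a) :=
  ⟨fun _ => PUnit.unit, fun _ _ h => by simp [oneUnlabeled] at h,
   fun _ _ h => by simp [oneUnlabeled] at h⟩

end LGraph

/-!
If `u = μ(n)` with `n` labeled, then `u ∼ ρ(n)`, and `ρ(n)` is labeled. Conversely, if every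
node of the fibre `μ⁻¹(u)` is unlabeled, then the class of `u` can be written down explicitly:
on the `R` side it consists of the `ρ`-images of that fibre, all of which are unlabeled by the
LRR conditions. That this description is closed under `∼` uses that `ρ` is injective on
unlabeled nodes and never identifies a labeled node with an unlabeled one, and that the fresh
nodes of `D(U,μ(E))` correspond bijectively to `E` since `μ` is `Ω`-injective.
-/

namespace LGraph

variable {Ω : Type} {ar : Ω → ℕ}

theorem Hom.label_isSome {G H : LGraph Ω ar} (φ : Hom G H) {n : G.N}
    (h : (G.label n).isSome) : (H.label (φ.toFun n)).isSome := by
  obtain ⟨f, hf⟩ := Option.isSome_iff_exists.mp h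
  simp [φ.map_label n f hf]

theorem Hom.label_eq_none_of_label_map_eq_none {G H : LGraph Ω ar} (φ : Hom G H) {n : G.N}
    (h : H.label (φ.toFun n) = none) : G.label n = none := by
  rw [← Option.not_isSome_iff_eq_none] at h ⊢
  exact mt φ.label_isSome h

theorem OmegaInjective.edgeMap_injective {G H : LGraph Ω ar} {μ : Hom G H}
    (hμ : OmegaInjective μ) : Function.Injective μ.edgeMap := by
  rintro ⟨n, i⟩ ⟨n', i'⟩ h
  obtain rfl : n = n' :=
    hμ n n' (Edge.label_isSome ⟨n, i⟩) (Edge.label_isSome ⟨n', i'⟩) (congrArg Sigma.fst h)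
  have hi : (i : ℕ) = i' := by
    simpa [Hom.edgeMap] using congrArg (fun x : H.Edge => (x.2 : ℕ)) h
  rw [Fin.ext hi]

theorem iff_of_eqvGen_spanRel {G₀ G₁ G₂ : LGraph Ω ar} {φ₁ : Hom G₀ G₁} {φ₂ : Hom G₀ G₂}
    {p : G₁.N ⊕ G₂.N → Prop}
    (hp : ∀ n₀, p (Sum.inl (φ₁.toFun n₀)) ↔ p (Sum.inr (φ₂.toFun n₀)))
    {x y : G₁.N ⊕ G₂.N} (hxy : Relation.EqvGen (spanRel φ₁ φ₂) x y) : p x ↔ p y := by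
  have hequiv : Equivalence fun x y => p x ↔ p y := ⟨fun _ => Iff.rfl, Iff.symm, Iff.trans⟩
  refine hequiv.eqvGen_iff.mp (Relation.EqvGen.mono ?_ _ _ hxy)
  rintro _ _ ⟨n₀, rfl, rfl⟩
  exact hp n₀

section Rewrite

variable {L R U : LGraph Ω ar} {E : Set L.Edge} {ρ : Hom (L.D E) R} {μ : Hom L U} {u : U.N}

variable (E ρ μ u) in
def fibreImage : Set R.N :=
  {r | ∃ n, μ.toFun n = u ∧ ρ.toFun (Sum.inl n) = r}

variable (E ρ μ u) in
/-- The `∼`-class of `u` when the fibre `μ⁻¹(u)` has no labeled node. -/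
def nodeClass : (U.D (μ.edgeMap '' E)).N ⊕ R.N → Prop :=
  Sum.elim
    (Sum.elim (· = u) fun f =>
      ∃ e, ∃ he : e ∈ E, μ.edgeMap e = f.1 ∧ ρ.toFun (Sum.inr ⟨e, he⟩) ∈ fibreImage E ρ μ u)
    (· ∈ fibreImage E ρ μ u)

theorem label_eq_none_of_mem_fibreImage (hrule : IsLRRRule E ρ)
    (hu : ∀ n, μ.toFun n = u → L.label n = none) {r : R.N} (hr : r ∈ fibreImage E ρ μ u) :
    R.label r = none := by
  obtain ⟨n, hn, rfl⟩ := hr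
  exact hrule.1 n (hu n hn)

theorem inl_mem_fibreImage_iff (hrule : IsLRRRule E ρ)
    (hu : ∀ n, μ.toFun n = u → L.label n = none) (n : L.N) :
    ρ.toFun (Sum.inl n) ∈ fibreImage E ρ μ u ↔ μ.toFun n = u := by
  refine ⟨fun hmem => ?_, fun hn => ⟨n, hn, rfl⟩⟩
  obtain ⟨n', hn', hρ⟩ := hmem
  have hn_none : L.label n = none := ρ.label_eq_none_of_label_map_eq_none
    (label_eq_none_of_mem_fibreImage hrule hu ⟨n', hn', hρ⟩)
  rwa [hrule.2 n n' hn_none (hu n' hn') hρ.symm]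

theorem nodeClass_dmapFun_iff (hrule : IsLRRRule E ρ) (hμ : OmegaInjective μ)
    (hu : ∀ n, μ.toFun n = u → L.label n = none) (n₀ : (L.D E).N) :
    nodeClass E ρ μ u (Sum.inl (dmapFun μ E n₀)) ↔ nodeClass E ρ μ u (Sum.inr (ρ.toFun n₀)) := by
  rcases n₀ with n | ⟨e, he⟩
  · exact (inl_mem_fibreImage_iff hrule hu n).symm
  · refine ⟨fun ⟨e', he', heq, hmem⟩ => ?_, fun hmem => ⟨e, he, rfl, hmem⟩⟩
    cases hμ.edgeMap_injective heq
    exact hmem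

end Rewrite

end LGraph

/-- A labeled node of `U` is equivalent (under the relation generated by
`D_{μ,E}(n) ∼ ρ(n)`) to some labeled node of `R` if and only if it lies in the image
`μ(N_L^Ω)` of the labeled nodes of `L`. -/
theorem labeled_U_equiv_labeled_R_iff {Ω : Type} {ar : Ω → ℕ} {L R U : LGraph Ω ar}
    (E : Set L.Edge) (ρ : LGraph.Hom (L.D E) R) (hrule : LGraph.IsLRRRule E ρ)
    (μ : LGraph.Hom L U) (hμ : LGraph.OmegaInjective μ) :
    ∀ d : LGraph.Hom (L.D E) (U.D (μ.edgeMap '' E)), d.toFun = LGraph.dmapFun μ E →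
      ∀ u : U.N, (U.label u).isSome →
        ((∃ nR : R.N, (R.label nR).isSome ∧
            Relation.EqvGen (LGraph.spanRel d ρ) (Sum.inl (Sum.inl u)) (Sum.inr nR)) ↔
          ∃ nL : L.N, (L.label nL).isSome ∧ μ.toFun nL = u) := by
  intro d hd u _
  constructor
  · rintro ⟨nR, hnR, hequiv⟩
    by_contra hno
    have hu : ∀ n, μ.toFun n = u → L.label n = none := fun n hn =>
      Option.not_isSome_iff_eq_none.mp fun hn' => hno ⟨n, hn', hn⟩
    have hclass : ∀ n₀, LGraph.nodeClass E ρ μ u (Sum.inl (d.toFun n₀)) ↔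
        LGraph.nodeClass E ρ μ u (Sum.inr (ρ.toFun n₀)) := by
      rw [hd]
      exact LGraph.nodeClass_dmapFun_iff hrule hμ hu
    have hmem : nR ∈ LGraph.fibreImage E ρ μ u :=
      (LGraph.iff_of_eqvGen_spanRel hclass hequiv).mp rfl
    simp [LGraph.label_eq_none_of_mem_fibreImage hrule hu hmem] at hnR
  · rintro ⟨nL, hnL, rfl⟩
    exact ⟨ρ.toFun (Sum.inl nL), ρ.label_isSome hnL,
      .rel _ _ ⟨Sum.inl nL, by rw [hd]; rfl, rfl⟩⟩
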